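/- arXiv:1307.0204 — 2 statements merged into one kernel-verified Lean document; each statement's English description precedes it below -/
import Mathlib

section
/- Bisimilarity of C/E nets with boundaries is a congruence with respect to the tensor product ⊗, and both the strong and the weak bisimilarity of P/T nets with boundaries are congruences with respect to composition ';' and tensor ⊗: tensoring two bisimilar C/E nets with the same C/E net (on either side) yields bisimilar nets, and for P/T nets, composing or tensoring two (strongly, resp. weakly) bisimilar nets with the same net, on either side, yields (strongly, resp. weakly) bisimilar nets. -/
/-- A C/E net with boundaries `m → n` (contention given as a plain relation;
the well-formedness conditions are collected in `CENet.Valid`). -/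
structure CENet (m n : ℕ) : Type 1 where
  P : Type
  T : Type
  pre : T → Set P
  post : T → Set P
  src : T → Set (Fin m)
  tgt : T → Set (Fin n)
  conten : T → T → Prop

namespace CENet

variable {k l m n : ℕ}

def preS (N : CENet m n) (U : Set N.T) : Set N.P := ⋃ t ∈ U, N.pre t
def postS (N : CENet m n) (U : Set N.T) : Set N.P := ⋃ t ∈ U, N.post t
def srcS (N : CENet m n) (U : Set N.T) : Set (Fin m) := ⋃ t ∈ U, N.src t
def tgtS (N : CENet m n) (U : Set N.T) : Set (Fin n) := ⋃ t ∈ U, N.tgt t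

/-- A set of transitions is mutually independent when no two distinct
members are in contention. -/
def MutInd (N : CENet m n) (U : Set N.T) : Prop :=
  ∀ t ∈ U, ∀ u ∈ U, t ≠ u → ¬ N.conten t u

/-- Well-formedness of a C/E net with boundaries: finiteness, the contention
relation is symmetric, irreflexive and contains all non-independent pairs and
all pairs sharing a boundary port, and transitions have distinct footprints. -/
def Valid (N : CENet m n) : Prop :=
  Finite N.P ∧ Finite N.T ∧
  (∀ t u : N.T, N.conten t u → N.conten u t) ∧
  (∀ t : N.T, ¬ N.conten t t) ∧
  (∀ t u : N.T, t ≠ u → (N.pre t ∩ N.pre u).Nonempty → N.conten t u) ∧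
  (∀ t u : N.T, t ≠ u → (N.post t ∩ N.post u).Nonempty → N.conten t u) ∧
  (∀ t u : N.T, t ≠ u → (N.src t ∩ N.src u).Nonempty → N.conten t u) ∧
  (∀ t u : N.T, t ≠ u → (N.tgt t ∩ N.tgt u).Nonempty → N.conten t u) ∧
  (∀ t u : N.T, N.pre t = N.pre u → N.post t = N.post u →
     N.src t = N.src u → N.tgt t = N.tgt u → t = u)

/-- C/E firing: `N_X →_U N_Y`. -/
def Fire (N : CENet m n) (X : Set N.P) (U : Set N.T) (Y : Set N.P) : Prop :=
  N.MutInd U ∧ N.preS U ⊆ X ∧ N.postS U ∩ X = ∅ ∧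
    Y = (X \ N.preS U) ∪ N.postS U

/-- Labelled semantics of C/E nets with boundaries (labels as subsets of
ports, i.e. elements of `{0,1}^m` via characteristic functions). -/
def Lts (N : CENet m n) (X : Set N.P) (α : Set (Fin m)) (β : Set (Fin n))
    (Y : Set N.P) : Prop :=
  ∃ U : Set N.T, N.Fire X U Y ∧ α = N.srcS U ∧ β = N.tgtS U

/-- Synchronisation between C/E nets with a common boundary. -/
def Synch (M : CENet l m) (N : CENet m n) (U : Set M.T) (V : Set N.T) : Prop :=
  M.MutInd U ∧ N.MutInd V ∧ ¬(U = ∅ ∧ V = ∅) ∧ M.tgtS U = N.srcS V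

/-- Minimal synchronisation. -/
def MinSynch (M : CENet l m) (N : CENet m n) (U : Set M.T) (V : Set N.T) : Prop :=
  Synch M N U V ∧
    ∀ U' V', Synch M N U' V' → U' ⊆ U → V' ⊆ V → U' = U ∧ V' = V

end CENet
namespace CENet

variable {k l m n : ℕ}

/-- Tensor product of C/E nets with boundaries. -/
def tensor (M : CENet k l) (N : CENet m n) : CENet (k + m) (l + n) where
  P := M.P ⊕ N.P
  T := M.T ⊕ N.T
  pre := Sum.elim (fun t => Sum.inl '' M.pre t) (fun t => Sum.inr '' N.pre t)
  post := Sum.elim (fun t => Sum.inl '' M.post t) (fun t => Sum.inr '' N.post t)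
  src := Sum.elim (fun t => Fin.castAdd m '' M.src t) (fun t => Fin.natAdd k '' N.src t)
  tgt := Sum.elim (fun t => Fin.castAdd n '' M.tgt t) (fun t => Fin.natAdd l '' N.tgt t)
  conten s t :=
    (∃ a b, s = Sum.inl a ∧ t = Sum.inl b ∧ M.conten a b) ∨
    (∃ a b, s = Sum.inr a ∧ t = Sum.inr b ∧ N.conten a b)

end CENet
namespace CENet

/-- Combined marking on a disjoint union of places. -/
def mk2 {A B : Type} (X : Set A) (Y : Set B) : Set (A ⊕ B) :=
  Sum.inl '' X ∪ Sum.inr '' Y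

end CENet

/-- A P/T net with boundaries `m → n` (well-formedness in `PTNet.Valid`). -/
structure PTNet (m n : ℕ) : Type 1 where
  P : Type
  T : Type
  pre : T → Multiset P
  post : T → Multiset P
  src : T → Multiset (Fin m)
  tgt : T → Multiset (Fin n)

namespace PTNet

variable {k l m n : ℕ}

/-- Linear extension of `pre` to multisets of transitions. -/
def preM (N : PTNet m n) (U : Multiset N.T) : Multiset N.P := (U.map N.pre).sum
def postM (N : PTNet m n) (U : Multiset N.T) : Multiset N.P := (U.map N.post).sum
def srcM (N : PTNet m n) (U : Multiset N.T) : Multiset (Fin m) := (U.map N.src).sum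
def tgtM (N : PTNet m n) (U : Multiset N.T) : Multiset (Fin n) := (U.map N.tgt).sum

/-- Well-formedness: finiteness and distinct footprints. -/
def Valid (N : PTNet m n) : Prop :=
  Finite N.P ∧ Finite N.T ∧
  ∀ t u : N.T, N.pre t = N.pre u → N.post t = N.post u →
    N.src t = N.src u → N.tgt t = N.tgt u → t = u

/-- Strong firing of P/T nets: `N_X →_U N_Y`. -/
def SFire (N : PTNet m n) (X : Multiset N.P) (U : Multiset N.T)
    (Y : Multiset N.P) : Prop :=
  letI := Classical.decEq N.P
  N.preM U ≤ X ∧ N.postM U ≤ Y ∧ X - N.preM U = Y - N.postM U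

/-- Weak (banking) firing of P/T nets: `N_X ⇒_U N_Y`. -/
def WFire (N : PTNet m n) (X : Multiset N.P) (U : Multiset N.T)
    (Y : Multiset N.P) : Prop :=
  Y + N.preM U = X + N.postM U

/-- Characteristic function `χ : Multiset (Fin k) → ℕ^k`. -/
def chiM {k : ℕ} (M : Multiset (Fin k)) : Fin k → ℕ := fun i => M.count i

/-- Strong labelled semantics of P/T nets with boundaries. -/
def SLts (N : PTNet m n) (X : Multiset N.P) (α : Fin m → ℕ) (β : Fin n → ℕ)
    (Y : Multiset N.P) : Prop :=
  ∃ U : Multiset N.T, N.SFire X U Y ∧ α = chiM (N.srcM U) ∧ β = chiM (N.tgtM U)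

/-- Weak labelled semantics of P/T nets with boundaries. -/
def WLts (N : PTNet m n) (X : Multiset N.P) (α : Fin m → ℕ) (β : Fin n → ℕ)
    (Y : Multiset N.P) : Prop :=
  ∃ U : Multiset N.T, N.WFire X U Y ∧ α = chiM (N.srcM U) ∧ β = chiM (N.tgtM U)

/-- Synchronisation between P/T nets with a common boundary. -/
def Synch (M : PTNet l m) (N : PTNet m n) (U : Multiset M.T)
    (V : Multiset N.T) : Prop :=
  ¬(U = 0 ∧ V = 0) ∧ M.tgtM U = N.srcM V

/-- Minimal synchronisation. -/
def MinSynch (M : PTNet l m) (N : PTNet m n) (U : Multiset M.T)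
    (V : Multiset N.T) : Prop :=
  Synch M N U V ∧
    ∀ U' V', Synch M N U' V' → U' ≤ U → V' ≤ V → U' = U ∧ V' = V

end PTNet
namespace PTNet

variable {k l m n : ℕ}

/-- Footprints of transitions of the composite P/T net. -/
def FootprintPT (M : PTNet l m) (N : PTNet m n) : Type :=
  Multiset (M.P ⊕ N.P) × Multiset (M.P ⊕ N.P) × Multiset (Fin l) × Multiset (Fin n)

def footOf (M : PTNet l m) (N : PTNet m n) (U : Multiset M.T) (V : Multiset N.T) :
    FootprintPT M N :=
  ((M.preM U).map Sum.inl + (N.preM V).map Sum.inr,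
   (M.postM U).map Sum.inl + (N.postM V).map Sum.inr,
   M.srcM U, N.tgtM V)

/-- Combined marking on a disjoint union of places. -/
def mmk {A B : Type} (X : Multiset A) (Y : Multiset B) : Multiset (A ⊕ B) :=
  X.map Sum.inl + Y.map Sum.inr

/-- Composition of P/T nets with boundaries along a common boundary. -/
def comp (M : PTNet l m) (N : PTNet m n) : PTNet l n where
  P := M.P ⊕ N.P
  T := {fp : FootprintPT M N // ∃ U V, MinSynch M N U V ∧ footOf M N U V = fp}
  pre t := t.1.1
  post t := t.1.2.1
  src t := t.1.2.2.1
  tgt t := t.1.2.2.2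

end PTNet
namespace PTNet

variable {k l m n : ℕ}

/-- Tensor product of P/T nets with boundaries. -/
def tensor (M : PTNet k l) (N : PTNet m n) : PTNet (k + m) (l + n) where
  P := M.P ⊕ N.P
  T := M.T ⊕ N.T
  pre := Sum.elim (fun t => (M.pre t).map Sum.inl) (fun t => (N.pre t).map Sum.inr)
  post := Sum.elim (fun t => (M.post t).map Sum.inl) (fun t => (N.post t).map Sum.inr)
  src := Sum.elim (fun t => (M.src t).map (Fin.castAdd m))
    (fun t => (N.src t).map (Fin.natAdd k))
  tgt := Sum.elim (fun t => (M.tgt t).map (Fin.castAdd n))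
    (fun t => (N.tgt t).map (Fin.natAdd l))

end PTNet
/-- A bisimulation for a two-labelled transition system. -/
def IsBisimulation {S : Type*} {L : Type*} (tr : S → L → S → Prop)
    (R : S → S → Prop) : Prop :=
  ∀ p q, R p q →
    (∀ a p', tr p a p' → ∃ q', tr q a q' ∧ R p' q') ∧
    (∀ a q', tr q a q' → ∃ p', tr p a p' ∧ R p' q')

/-- Bisimilarity: two states are bisimilar when some bisimulation relates them. -/
def Bisimilar {S : Type*} {L : Type*} (tr : S → L → S → Prop) (p q : S) : Prop :=
  ∃ R, IsBisimulation tr R ∧ R p q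
/-- States of the labelled transition system of marked C/E nets with boundaries. -/
def CEState (m n : ℕ) : Type 1 := Σ N : CENet m n, Set N.P

/-- Transitions of marked C/E nets with boundaries. -/
def ceTrans (m n : ℕ) :
    CEState m n → Set (Fin m) × Set (Fin n) → CEState m n → Prop :=
  fun s a s' => ∃ Y : Set s.1.P, s.1.Lts s.2 a.1 a.2 Y ∧ s' = ⟨s.1, Y⟩
/-- States of the labelled transition system of marked P/T nets with boundaries. -/
def PTState (m n : ℕ) : Type 1 := Σ N : PTNet m n, Multiset N.P

/-- Strong transitions of marked P/T nets with boundaries. -/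
def ptSTrans (m n : ℕ) :
    PTState m n → (Fin m → ℕ) × (Fin n → ℕ) → PTState m n → Prop :=
  fun s a s' => ∃ Y : Multiset s.1.P, s.1.SLts s.2 a.1 a.2 Y ∧ s' = ⟨s.1, Y⟩

/-- Weak transitions of marked P/T nets with boundaries. -/
def ptWTrans (m n : ℕ) :
    PTState m n → (Fin m → ℕ) × (Fin n → ℕ) → PTState m n → Prop :=
  fun s a s' => ∃ Y : Multiset s.1.P, s.1.WLts s.2 a.1 a.2 Y ∧ s' = ⟨s.1, Y⟩

/-!
A marking of `M ⊗ R` or `M ; R` is a pair of markings, and the composite net steps from `(a, c)`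
exactly when `M` steps from `a` and `R` from `c` with compatible labels: concatenated for `⊗`,
agreeing on the shared boundary for `;`. For `⊗` this holds because places, transitions and ports
are disjoint unions. For `;` a multiset of composite transitions flattens to a pair `(U, V)` of
multisets with `tgt U = src V`; conversely every such pair splits into minimal synchronisations,
i.e. transitions of `M ; R`, with the same total footprint. Given this decomposition, pairing
`(a, c)` with `(b, c)` for bisimilar `a` and `b` is a bisimulation. For P/T nets the argument uses
only that the firing rule acts independently on the two halves of a disjoint union of places,
which both the strong and the weak rule do.
-/

section Context

variable {ι L : Type*} {P : ι → Type*} (step : ∀ i, P i → L → P i → Prop)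

def sigmaTrans : (Σ i, P i) → L → (Σ i, P i) → Prop :=
  fun s a s' => ∃ Y, step s.1 s.2 a Y ∧ s' = ⟨s.1, Y⟩

variable {step}

theorem IsBisimulation.exists_step_right {R : (Σ i, P i) → (Σ i, P i) → Prop}
    (hR : IsBisimulation (sigmaTrans step) R) {i j : ι} {a : P i} {b : P j}
    (hab : R ⟨i, a⟩ ⟨j, b⟩) {l : L} {a' : P i} (h : step i a l a') :
    ∃ b', step j b l b' ∧ R ⟨i, a'⟩ ⟨j, b'⟩ := by
  obtain ⟨_, ⟨b', hb, rfl⟩, hR'⟩ := (hR _ _ hab).1 l _ ⟨a', h, rfl⟩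
  exact ⟨b', hb, hR'⟩

theorem IsBisimulation.exists_step_left {R : (Σ i, P i) → (Σ i, P i) → Prop}
    (hR : IsBisimulation (sigmaTrans step) R) {i j : ι} {a : P i} {b : P j}
    (hab : R ⟨i, a⟩ ⟨j, b⟩) {l : L} {b' : P j} (h : step j b l b') :
    ∃ a', step i a l a' ∧ R ⟨i, a'⟩ ⟨j, b'⟩ := by
  obtain ⟨_, ⟨a', ha, rfl⟩, hR'⟩ := (hR _ _ hab).2 l _ ⟨b', h, rfl⟩
  exact ⟨a', ha, hR'⟩

/-- Bisimilarity is preserved by any context `g · c` whose steps are exactly the pairs of a step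
of the hole and a step of `c` with compatible labels. -/
theorem Bisimilar.sigmaTrans_context {κ L' C L₂ : Type*} {Q : κ → Type*}
    {step' : ∀ j, Q j → L' → Q j → Prop} {stepC : C → L₂ → C → Prop}
    {Compat : L → L₂ → L' → Prop} {i₁ i₂ : ι} {j₁ j₂ : κ}
    {g₁ : P i₁ → C → Q j₁} {g₂ : P i₂ → C → Q j₂}
    (h₁ : ∀ a c lab Y, step' j₁ (g₁ a c) lab Y ↔
      ∃ a' c' l₁ l₂, Y = g₁ a' c' ∧ Compat l₁ l₂ lab ∧ step i₁ a l₁ a' ∧ stepC c l₂ c')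
    (h₂ : ∀ b c lab Y, step' j₂ (g₂ b c) lab Y ↔
      ∃ b' c' l₁ l₂, Y = g₂ b' c' ∧ Compat l₁ l₂ lab ∧ step i₂ b l₁ b' ∧ stepC c l₂ c')
    {a : P i₁} {b : P i₂} (hab : Bisimilar (sigmaTrans step) ⟨i₁, a⟩ ⟨i₂, b⟩) (c : C) :
    Bisimilar (sigmaTrans step') ⟨j₁, g₁ a c⟩ ⟨j₂, g₂ b c⟩ := by
  obtain ⟨R, hR, hab⟩ := hab
  refine ⟨fun s t => ∃ a b c, s = ⟨j₁, g₁ a c⟩ ∧ t = ⟨j₂, g₂ b c⟩ ∧ R ⟨i₁, a⟩ ⟨i₂, b⟩,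
    ?_, a, b, c, rfl, rfl, hab⟩
  rintro _ _ ⟨a, b, c, rfl, rfl, hab⟩
  constructor
  · rintro lab _ ⟨Y, hY, rfl⟩
    obtain ⟨a', c', l₁, l₂, rfl, hl, ha, hc⟩ := (h₁ a c lab Y).1 hY
    obtain ⟨b', hb, hab'⟩ := hR.exists_step_right hab ha
    exact ⟨_, ⟨_, (h₂ b c lab _).2 ⟨b', c', l₁, l₂, rfl, hl, hb, hc⟩, rfl⟩,
      a', b', c', rfl, rfl, hab'⟩
  · rintro lab _ ⟨Y, hY, rfl⟩
    obtain ⟨b', c', l₁, l₂, rfl, hl, hb, hc⟩ := (h₂ b c lab Y).1 hY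
    obtain ⟨a', ha, hab'⟩ := hR.exists_step_left hab hb
    exact ⟨_, ⟨_, (h₁ a c lab _).2 ⟨a', c', l₁, l₂, rfl, hl, ha, hc⟩, rfl⟩,
      a', b', c', rfl, rfl, hab'⟩

theorem Bisimilar.sigmaTrans_context' {κ L' C L₂ : Type*} {Q : κ → Type*}
    {step' : ∀ j, Q j → L' → Q j → Prop} {stepC : C → L₂ → C → Prop}
    {Compat : L₂ → L → L' → Prop} {i₁ i₂ : ι} {j₁ j₂ : κ}
    {g₁ : C → P i₁ → Q j₁} {g₂ : C → P i₂ → Q j₂}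
    (h₁ : ∀ c a lab Y, step' j₁ (g₁ c a) lab Y ↔
      ∃ c' a' l₂ l₁, Y = g₁ c' a' ∧ Compat l₂ l₁ lab ∧ stepC c l₂ c' ∧ step i₁ a l₁ a')
    (h₂ : ∀ c b lab Y, step' j₂ (g₂ c b) lab Y ↔
      ∃ c' b' l₂ l₁, Y = g₂ c' b' ∧ Compat l₂ l₁ lab ∧ stepC c l₂ c' ∧ step i₂ b l₁ b')
    {a : P i₁} {b : P i₂} (hab : Bisimilar (sigmaTrans step) ⟨i₁, a⟩ ⟨i₂, b⟩) (c : C) :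
    Bisimilar (sigmaTrans step') ⟨j₁, g₁ c a⟩ ⟨j₂, g₂ c b⟩ := by
  have swap {i j} (g : C → P i → Q j) (h : ∀ c a lab Y, step' j (g c a) lab Y ↔
      ∃ c' a' l₂ l₁, Y = g c' a' ∧ Compat l₂ l₁ lab ∧ stepC c l₂ c' ∧ step i a l₁ a')
      (a c lab Y) : step' j (g c a) lab Y ↔
      ∃ a' c' l₁ l₂, Y = g c' a' ∧ Compat l₂ l₁ lab ∧ step i a l₁ a' ∧ stepC c l₂ c' := by
    rw [h]
    constructor
    · rintro ⟨c', a', l₂, l₁, hY, hl, hc, ha⟩; exact ⟨a', c', l₁, l₂, hY, hl, ha, hc⟩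
    · rintro ⟨a', c', l₁, l₂, hY, hl, ha, hc⟩; exact ⟨c', a', l₂, l₁, hY, hl, hc, ha⟩
  exact hab.sigmaTrans_context (g₁ := fun a c => g₁ c a) (g₂ := fun b c => g₂ c b)
    (Compat := fun l₁ l₂ => Compat l₂ l₁) (swap g₁ h₁) (swap g₂ h₂) c

end Context

namespace CENet

section Mk2

variable {A B : Type} {a c : Set A} {b d : Set B}

@[simp] theorem inl_mem_mk2 {x : A} : Sum.inl x ∈ mk2 a b ↔ x ∈ a := by simp [mk2]

@[simp] theorem inr_mem_mk2 {x : B} : Sum.inr x ∈ mk2 a b ↔ x ∈ b := by simp [mk2]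

theorem exists_eq_mk2 (s : Set (A ⊕ B)) : ∃ a b, s = mk2 a b :=
  ⟨Sum.inl ⁻¹' s, Sum.inr ⁻¹' s, by ext (x | x) <;> simp⟩

theorem mk2_eq_mk2 : mk2 a b = mk2 c d ↔ a = c ∧ b = d := by
  simp only [Set.ext_iff, Sum.forall, inl_mem_mk2, inr_mem_mk2]

theorem mk2_subset_mk2 : mk2 a b ⊆ mk2 c d ↔ a ⊆ c ∧ b ⊆ d := by
  simp only [Set.subset_def, Sum.forall, inl_mem_mk2, inr_mem_mk2]

theorem mk2_inter_mk2 : mk2 a b ∩ mk2 c d = mk2 (a ∩ c) (b ∩ d) := by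
  ext (x | x) <;> simp

theorem mk2_union_mk2 : mk2 a b ∪ mk2 c d = mk2 (a ∪ c) (b ∪ d) := by
  ext (x | x) <;> simp

theorem mk2_diff_mk2 : mk2 a b \ mk2 c d = mk2 (a \ c) (b \ d) := by
  ext (x | x) <;> simp

theorem mk2_empty : mk2 (∅ : Set A) (∅ : Set B) = ∅ := by
  ext (x | x) <;> simp

def FiresSet {A : Type} (X p q Y : Set A) : Prop :=
  p ⊆ X ∧ q ∩ X = ∅ ∧ Y = (X \ p) ∪ q

theorem firesSet_mk2 {p : Set A} {p' : Set B} {q : Set A} {q' : Set B} {Y : Set A} {W : Set B} :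
    FiresSet (mk2 a b) (mk2 p p') (mk2 q q') (mk2 Y W) ↔
      FiresSet a p q Y ∧ FiresSet b p' q' W := by
  simp only [FiresSet, mk2_subset_mk2, mk2_inter_mk2, mk2_diff_mk2, mk2_union_mk2, ← mk2_empty,
    mk2_eq_mk2]
  tauto

end Mk2

/-- Concatenation of boundary labels, read as words in `{0,1}^k` and `{0,1}^m`. -/
def appendPorts {k m : ℕ} (α : Set (Fin k)) (β : Set (Fin m)) : Set (Fin (k + m)) :=
  Fin.castAdd m '' α ∪ Fin.natAdd k '' β

section Tensor

variable {k l m n : ℕ} (M : CENet k l) (R : CENet m n) (U₁ : Set M.T) (U₂ : Set R.T)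

theorem tensor_preS : (M.tensor R).preS (mk2 U₁ U₂) = mk2 (M.preS U₁) (R.preS U₂) := by
  dsimp only [tensor, preS]
  ext (x | x) <;> simp

theorem tensor_postS : (M.tensor R).postS (mk2 U₁ U₂) = mk2 (M.postS U₁) (R.postS U₂) := by
  dsimp only [tensor, postS]
  ext (x | x) <;> simp

theorem tensor_srcS : (M.tensor R).srcS (mk2 U₁ U₂) = appendPorts (M.srcS U₁) (R.srcS U₂) := by
  dsimp only [tensor, srcS]
  ext i
  simp [mk2, appendPorts, Set.image_iUnion₂, or_and_right, exists_or]

theorem tensor_tgtS : (M.tensor R).tgtS (mk2 U₁ U₂) = appendPorts (M.tgtS U₁) (R.tgtS U₂) := by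
  dsimp only [tensor, tgtS]
  ext i
  simp [mk2, appendPorts, Set.image_iUnion₂, or_and_right, exists_or]

theorem tensor_mutInd : (M.tensor R).MutInd (mk2 U₁ U₂) ↔ M.MutInd U₁ ∧ R.MutInd U₂ := by
  dsimp only [tensor, MutInd]
  simp [Sum.forall]

theorem tensor_fire_iff (X Y : Set M.P) (Z W : Set R.P) :
    (M.tensor R).Fire (mk2 X Z) (mk2 U₁ U₂) (mk2 Y W) ↔ M.Fire X U₁ Y ∧ R.Fire Z U₂ W := by
  have h := (tensor_mutInd M R U₁ U₂).and
    (firesSet_mk2 (a := X) (b := Z) (p := M.preS U₁) (p' := R.preS U₂) (q := M.postS U₁)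
      (q' := R.postS U₂) (Y := Y) (W := W))
  rw [← tensor_preS, ← tensor_postS] at h
  exact h.trans and_and_and_comm

end Tensor

variable {k l m n : ℕ}

theorem tensor_lts_mk2_iff (M : CENet k l) (R : CENet m n) (X : Set M.P) (Z : Set R.P)
    (lab : Set (Fin (k + m)) × Set (Fin (l + n))) (Y : Set (M.tensor R).P) :
    (M.tensor R).Lts (mk2 X Z) lab.1 lab.2 Y ↔
      ∃ X' Z', ∃ (l₁ : Set (Fin k) × Set (Fin l)) (l₂ : Set (Fin m) × Set (Fin n)), Y = mk2 X' Z' ∧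
        lab = (appendPorts l₁.1 l₂.1, appendPorts l₁.2 l₂.2) ∧
        M.Lts X l₁.1 l₁.2 X' ∧ R.Lts Z l₂.1 l₂.2 Z' := by
  constructor
  · rintro ⟨U, hU, hα, hβ⟩
    obtain ⟨U₁, U₂, rfl⟩ := exists_eq_mk2 U
    obtain ⟨X', Z', rfl⟩ := exists_eq_mk2 Y
    obtain ⟨h₁, h₂⟩ := (tensor_fire_iff M R U₁ U₂ X X' Z Z').1 hU
    refine ⟨X', Z', (M.srcS U₁, M.tgtS U₁), (R.srcS U₂, R.tgtS U₂), rfl, ?_,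
      ⟨U₁, h₁, rfl, rfl⟩, ⟨U₂, h₂, rfl, rfl⟩⟩
    rw [← tensor_srcS, ← tensor_tgtS, ← hα, ← hβ]
  · rintro ⟨X', Z', ⟨α₁, β₁⟩, ⟨α₂, β₂⟩, rfl, rfl, ⟨U₁, h₁, rfl, rfl⟩, ⟨U₂, h₂, rfl, rfl⟩⟩
    exact ⟨mk2 U₁ U₂, (tensor_fire_iff M R U₁ U₂ X X' Z Z').2 ⟨h₁, h₂⟩,
      (tensor_srcS M R U₁ U₂).symm, (tensor_tgtS M R U₁ U₂).symm⟩

theorem ceTrans_eq_sigmaTrans :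
    ceTrans m n = sigmaTrans fun (N : CENet m n) X a Y => N.Lts X a.1 a.2 Y := rfl

theorem bisimilar_tensor_right {M₁ M₂ : CENet k l} {X₁ : Set M₁.P} {X₂ : Set M₂.P}
    (h : Bisimilar (ceTrans k l) ⟨M₁, X₁⟩ ⟨M₂, X₂⟩) (R : CENet m n) (Z : Set R.P) :
    Bisimilar (ceTrans (k + m) (l + n)) ⟨M₁.tensor R, mk2 X₁ Z⟩ ⟨M₂.tensor R, mk2 X₂ Z⟩ := by
  rw [ceTrans_eq_sigmaTrans] at h ⊢
  exact h.sigmaTrans_context (tensor_lts_mk2_iff M₁ R) (tensor_lts_mk2_iff M₂ R) Z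

theorem bisimilar_tensor_left {M₁ M₂ : CENet k l} {X₁ : Set M₁.P} {X₂ : Set M₂.P}
    (h : Bisimilar (ceTrans k l) ⟨M₁, X₁⟩ ⟨M₂, X₂⟩) (R : CENet m n) (Z : Set R.P) :
    Bisimilar (ceTrans (m + k) (n + l)) ⟨R.tensor M₁, mk2 Z X₁⟩ ⟨R.tensor M₂, mk2 Z X₂⟩ := by
  rw [ceTrans_eq_sigmaTrans] at h ⊢
  exact h.sigmaTrans_context' (tensor_lts_mk2_iff R M₁) (tensor_lts_mk2_iff R M₂) Z

end CENet

namespace PTNet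

section Mmk

variable {A B : Type}

@[simp] theorem count_inl_mmk [DecidableEq A] [DecidableEq B] (a : Multiset A) (b : Multiset B)
    (x : A) : (mmk a b).count (Sum.inl x) = a.count x := by
  simp [mmk, Multiset.count_map_eq_count' _ _ Sum.inl_injective]

@[simp] theorem count_inr_mmk [DecidableEq A] [DecidableEq B] (a : Multiset A) (b : Multiset B)
    (x : B) : (mmk a b).count (Sum.inr x) = b.count x := by
  simp [mmk, Multiset.count_map_eq_count' _ _ Sum.inr_injective]

theorem mmk_eq_mmk {a c : Multiset A} {b d : Multiset B} :
    mmk a b = mmk c d ↔ a = c ∧ b = d := by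
  classical
  simp only [Multiset.ext, Sum.forall, count_inl_mmk, count_inr_mmk]

theorem mmk_add (a a' : Multiset A) (b b' : Multiset B) :
    mmk (a + a') (b + b') = mmk a b + mmk a' b' := by
  simp only [mmk, Multiset.map_add]
  abel

theorem exists_eq_mmk (s : Multiset (A ⊕ B)) : ∃ a b, s = mmk a b := by
  induction s using Multiset.induction with
  | empty => exact ⟨0, 0, rfl⟩
  | cons x s ih =>
    obtain ⟨a, b, rfl⟩ := ih
    rcases x with x | x
    · exact ⟨x ::ₘ a, b, by simp [mmk]⟩
    · exact ⟨a, x ::ₘ b, by simp [mmk]⟩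

end Mmk

/-- `Fires X p q Y`: from the marking `X`, consuming `p` and producing `q` may lead to `Y`. -/
structure FiringRule where
  Fires : ∀ {A : Type}, Multiset A → Multiset A → Multiset A → Multiset A → Prop
  fires_mmk_iff : ∀ {A B : Type} (X : Multiset A) (Z : Multiset B) (p q : Multiset A)
    (p' q' : Multiset B) (Y : Multiset (A ⊕ B)),
    Fires (mmk X Z) (mmk p p') (mmk q q') Y ↔
      ∃ X' Z', Y = mmk X' Z' ∧ Fires X p q X' ∧ Fires Z p' q' Z'

namespace FiringRule

/-- `p ≤ X`, `q ≤ Y` and `X - p = Y - q`, stated without truncated subtraction. -/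
def strong : FiringRule where
  Fires X p q Y := ∃ K, X = p + K ∧ Y = q + K
  fires_mmk_iff X Z p q p' q' Y := by
    constructor
    · rintro ⟨K, hX, rfl⟩
      obtain ⟨K₁, K₂, rfl⟩ := exists_eq_mmk K
      rw [← mmk_add, mmk_eq_mmk] at hX
      exact ⟨q + K₁, q' + K₂, (mmk_add _ _ _ _).symm, ⟨K₁, hX.1, rfl⟩, ⟨K₂, hX.2, rfl⟩⟩
    · rintro ⟨_, _, rfl, ⟨K₁, rfl, rfl⟩, ⟨K₂, rfl, rfl⟩⟩
      exact ⟨mmk K₁ K₂, mmk_add _ _ _ _, mmk_add _ _ _ _⟩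

def weak : FiringRule where
  Fires X p q Y := Y + p = X + q
  fires_mmk_iff X Z p q p' q' Y := by
    obtain ⟨Y₁, Y₂, rfl⟩ := exists_eq_mmk Y
    simp [← mmk_add, mmk_eq_mmk]

variable {m n : ℕ}

def Step (ρ : FiringRule) (N : PTNet m n) (X : Multiset N.P) (lab : (Fin m → ℕ) × (Fin n → ℕ))
    (Y : Multiset N.P) : Prop :=
  ∃ U, ρ.Fires X (N.preM U) (N.postM U) Y ∧ lab = (chiM (N.srcM U), chiM (N.tgtM U))

end FiringRule

variable {k l m n : ℕ}

@[simp] theorem preM_add (N : PTNet m n) (U U' : Multiset N.T) :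
    N.preM (U + U') = N.preM U + N.preM U' := by
  simp [preM]

@[simp] theorem postM_add (N : PTNet m n) (U U' : Multiset N.T) :
    N.postM (U + U') = N.postM U + N.postM U' := by
  simp [postM]

@[simp] theorem srcM_add (N : PTNet m n) (U U' : Multiset N.T) :
    N.srcM (U + U') = N.srcM U + N.srcM U' := by
  simp [srcM]

@[simp] theorem tgtM_add (N : PTNet m n) (U U' : Multiset N.T) :
    N.tgtM (U + U') = N.tgtM U + N.tgtM U' := by
  simp [tgtM]

theorem chiM_injective : Function.Injective (chiM (k := k)) :=
  fun _ _ h => Multiset.ext.2 (congrFun h)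

theorem chiM_map_castAdd_add_map_natAdd (S : Multiset (Fin k)) (T : Multiset (Fin m)) :
    chiM (S.map (Fin.castAdd m) + T.map (Fin.natAdd k)) = Fin.append (chiM S) (chiM T) := by
  funext i
  refine Fin.addCases (fun i => ?_) (fun i => ?_) i
  · simp [chiM, Multiset.count_map_eq_count' _ _ (Fin.castAdd_injective k m), Fin.ext_iff]
    omega
  · simp [chiM, Multiset.count_map_eq_count' _ _ (Fin.natAdd_injective m k), Fin.ext_iff]
    omega

theorem sum_map_elim_mmk {A B C D E : Type} (f : A → Multiset C) (g : B → Multiset D)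
    (φ : C → E) (ψ : D → E) (U₁ : Multiset A) (U₂ : Multiset B) :
    ((mmk U₁ U₂).map (Sum.elim (fun t => (f t).map φ) (fun t => (g t).map ψ))).sum =
      ((U₁.map f).sum).map φ + ((U₂.map g).sum).map ψ := by
  simp only [mmk, Multiset.map_add, Multiset.sum_add, Multiset.map_map, Function.comp_def,
    Sum.elim_inl, Sum.elim_inr]
  exact congrArg₂ (· + ·) (Multiset.map_bind _ _ _).symm (Multiset.map_bind _ _ _).symm

section Tensor

variable (M : PTNet k l) (R : PTNet m n) (U₁ : Multiset M.T) (U₂ : Multiset R.T)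

theorem tensor_preM : (M.tensor R).preM (mmk U₁ U₂) = mmk (M.preM U₁) (R.preM U₂) :=
  sum_map_elim_mmk _ _ _ _ U₁ U₂

theorem tensor_postM : (M.tensor R).postM (mmk U₁ U₂) = mmk (M.postM U₁) (R.postM U₂) :=
  sum_map_elim_mmk _ _ _ _ U₁ U₂

theorem tensor_chiM_srcM :
    chiM ((M.tensor R).srcM (mmk U₁ U₂)) = Fin.append (chiM (M.srcM U₁)) (chiM (R.srcM U₂)) := by
  rw [← chiM_map_castAdd_add_map_natAdd]
  exact congrArg chiM (sum_map_elim_mmk _ _ _ _ U₁ U₂)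

theorem tensor_chiM_tgtM :
    chiM ((M.tensor R).tgtM (mmk U₁ U₂)) = Fin.append (chiM (M.tgtM U₁)) (chiM (R.tgtM U₂)) := by
  rw [← chiM_map_castAdd_add_map_natAdd]
  exact congrArg chiM (sum_map_elim_mmk _ _ _ _ U₁ U₂)

end Tensor

theorem tensor_step_mmk_iff (ρ : FiringRule) (M : PTNet k l) (R : PTNet m n) (X : Multiset M.P)
    (Z : Multiset R.P) (lab : (Fin (k + m) → ℕ) × (Fin (l + n) → ℕ))
    (Y : Multiset (M.tensor R).P) :
    ρ.Step (M.tensor R) (mmk X Z) lab Y ↔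
      ∃ X' Z', ∃ (l₁ : (Fin k → ℕ) × (Fin l → ℕ)) (l₂ : (Fin m → ℕ) × (Fin n → ℕ)),
        Y = mmk X' Z' ∧ lab = (Fin.append l₁.1 l₂.1, Fin.append l₁.2 l₂.2) ∧
        ρ.Step M X l₁ X' ∧ ρ.Step R Z l₂ Z' := by
  constructor
  · rintro ⟨U, hU, rfl⟩
    obtain ⟨U₁, U₂, rfl⟩ := exists_eq_mmk U
    rw [tensor_preM, tensor_postM] at hU
    obtain ⟨X', Z', rfl, h₁, h₂⟩ := (ρ.fires_mmk_iff _ _ _ _ _ _ _).1 hU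
    exact ⟨X', Z', _, _, rfl, by rw [tensor_chiM_srcM, tensor_chiM_tgtM], ⟨U₁, h₁, rfl⟩,
      ⟨U₂, h₂, rfl⟩⟩
  · rintro ⟨X', Z', _, _, rfl, rfl, ⟨U₁, h₁, rfl⟩, ⟨U₂, h₂, rfl⟩⟩
    refine ⟨mmk U₁ U₂, ?_, by rw [tensor_chiM_srcM, tensor_chiM_tgtM]⟩
    rw [tensor_preM, tensor_postM]
    exact (ρ.fires_mmk_iff _ _ _ _ _ _ _).2 ⟨X', Z', rfl, h₁, h₂⟩

section Comp

variable {M : PTNet l m} {N : PTNet m n}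

theorem Synch.exists_minSynch_le {U : Multiset M.T} {V : Multiset N.T} (h : Synch M N U V) :
    ∃ U₀ ≤ U, ∃ V₀ ≤ V, MinSynch M N U₀ V₀ := by
  obtain ⟨⟨U₀, V₀⟩, ⟨h₀, hU₀, hV₀⟩, hmin⟩ := wellFounded_lt.has_min
    {p : Multiset M.T × Multiset N.T | Synch M N p.1 p.2 ∧ p.1 ≤ U ∧ p.2 ≤ V}
    ⟨(U, V), h, le_rfl, le_rfl⟩
  refine ⟨U₀, hU₀, V₀, hV₀, h₀, fun U' V' h' hU' hV' => ?_⟩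
  have hle : (U', V') ≤ (U₀, V₀) := ⟨hU', hV'⟩
  have := eq_of_le_of_not_lt hle (hmin _ ⟨h', hU'.trans hU₀, hV'.trans hV₀⟩)
  exact Prod.ext_iff.1 this

variable (M N)

def SameFootprint (W : Multiset (M.comp N).T) (U : Multiset M.T) (V : Multiset N.T) : Prop :=
  (M.comp N).preM W = mmk (M.preM U) (N.preM V) ∧ (M.comp N).postM W = mmk (M.postM U) (N.postM V) ∧
    (M.comp N).srcM W = M.srcM U ∧ (M.comp N).tgtM W = N.tgtM V

variable {M N}

theorem sameFootprint_zero : SameFootprint M N 0 0 0 := ⟨rfl, rfl, rfl, rfl⟩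

theorem SameFootprint.add {W W' : Multiset (M.comp N).T} {U U' : Multiset M.T}
    {V V' : Multiset N.T} (h : SameFootprint M N W U V) (h' : SameFootprint M N W' U' V') :
    SameFootprint M N (W + W') (U + U') (V + V') := by
  obtain ⟨h₁, h₂, h₃, h₄⟩ := h
  obtain ⟨h₁', h₂', h₃', h₄'⟩ := h'
  refine ⟨?_, ?_, ?_, ?_⟩
  · rw [preM_add, preM_add, preM_add, mmk_add]
    exact congrArg₂ (· + ·) h₁ h₁'
  · rw [postM_add, postM_add, postM_add, mmk_add]
    exact congrArg₂ (· + ·) h₂ h₂'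
  · rw [srcM_add, srcM_add, h₃, h₃']
  · rw [tgtM_add, tgtM_add, h₄, h₄']

theorem sameFootprint_singleton {t : (M.comp N).T} {U : Multiset M.T} {V : Multiset N.T}
    (h : footOf M N U V = t.1) : SameFootprint M N {t} U V := by
  simp only [SameFootprint, preM, postM, srcM, tgtM, Multiset.map_singleton, Multiset.sum_singleton]
  obtain ⟨_, _⟩ := t
  subst h
  exact ⟨rfl, rfl, rfl, rfl⟩

theorem exists_tgtM_eq_srcM_sameFootprint (W : Multiset (M.comp N).T) :
    ∃ U V, M.tgtM U = N.srcM V ∧ SameFootprint M N W U V := by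
  induction W using Multiset.induction with
  | empty => exact ⟨0, 0, rfl, sameFootprint_zero⟩
  | cons t W ih =>
    obtain ⟨U, V, hUV, hW⟩ := ih
    obtain ⟨U₀, V₀, hmin, hfoot⟩ := t.2
    refine ⟨U₀ + U, V₀ + V, by simp only [tgtM_add, srcM_add, hmin.1.2, hUV], ?_⟩
    rw [← Multiset.singleton_add]
    exact (sameFootprint_singleton hfoot).add hW

theorem exists_sameFootprint_of_tgtM_eq_srcM {U : Multiset M.T} {V : Multiset N.T}
    (h : M.tgtM U = N.srcM V) : ∃ W, SameFootprint M N W U V := by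
  suffices ∀ p : Multiset M.T × Multiset N.T, M.tgtM p.1 = N.srcM p.2 →
      ∃ W, SameFootprint M N W p.1 p.2 from this (U, V) h
  intro p
  induction p using WellFoundedLT.induction with
  | _ p ih =>
  intro h
  by_cases hp : p = 0
  · subst hp
    exact ⟨0, sameFootprint_zero⟩
  -- peel off a minimal synchronisation below `p` and recurse on the rest
  obtain ⟨U₀, hU₀, V₀, hV₀, hmin⟩ :=
    Synch.exists_minSynch_le ⟨fun h0 => hp (Prod.ext h0.1 h0.2), h⟩
  obtain ⟨q, rfl⟩ : ∃ q, p = (U₀, V₀) + q := exists_add_of_le (show (U₀, V₀) ≤ p from ⟨hU₀, hV₀⟩)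
  have hpos : 0 < ((U₀, V₀) : Multiset M.T × Multiset N.T) :=
    pos_iff_ne_zero.2 fun h0 => hmin.1.1 (Prod.ext_iff.1 h0)
  have hq : M.tgtM q.1 = N.srcM q.2 := by
    simpa [hmin.1.2] using h
  obtain ⟨W, hW⟩ := ih q (lt_add_of_pos_left q hpos) hq
  exact ⟨{⟨footOf M N U₀ V₀, U₀, V₀, hmin, rfl⟩} + W, (sameFootprint_singleton rfl).add hW⟩

end Comp

theorem comp_step_mmk_iff (ρ : FiringRule) (M : PTNet l m) (N : PTNet m n) (X : Multiset M.P)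
    (Z : Multiset N.P) (lab : (Fin l → ℕ) × (Fin n → ℕ)) (Y : Multiset (M.comp N).P) :
    ρ.Step (M.comp N) (mmk X Z) lab Y ↔
      ∃ X' Z', ∃ (l₁ : (Fin l → ℕ) × (Fin m → ℕ)) (l₂ : (Fin m → ℕ) × (Fin n → ℕ)),
        Y = mmk X' Z' ∧ (l₁.2 = l₂.1 ∧ lab = (l₁.1, l₂.2)) ∧
        ρ.Step M X l₁ X' ∧ ρ.Step N Z l₂ Z' := by
  constructor
  · rintro ⟨W, hW, rfl⟩
    obtain ⟨U, V, hUV, hpre, hpost, hsrc, htgt⟩ := exists_tgtM_eq_srcM_sameFootprint W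
    rw [hpre, hpost] at hW
    obtain ⟨X', Z', rfl, h₁, h₂⟩ := (ρ.fires_mmk_iff _ _ _ _ _ _ _).1 hW
    exact ⟨X', Z', _, _, rfl, ⟨congrArg chiM hUV, by rw [hsrc, htgt]⟩, ⟨U, h₁, rfl⟩,
      ⟨V, h₂, rfl⟩⟩
  · rintro ⟨X', Z', _, _, rfl, ⟨hγ, rfl⟩, ⟨U, h₁, rfl⟩, ⟨V, h₂, rfl⟩⟩
    obtain ⟨W, hpre, hpost, hsrc, htgt⟩ := exists_sameFootprint_of_tgtM_eq_srcM (chiM_injective hγ)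
    refine ⟨W, ?_, by rw [hsrc, htgt]⟩
    rw [hpre, hpost]
    exact (ρ.fires_mmk_iff _ _ _ _ _ _ _).2 ⟨X', Z', rfl, h₁, h₂⟩

theorem sFire_iff (N : PTNet m n) (X : Multiset N.P) (U : Multiset N.T) (Y : Multiset N.P) :
    N.SFire X U Y ↔ FiringRule.strong.Fires X (N.preM U) (N.postM U) Y := by
  let _ := Classical.decEq N.P
  constructor
  · rintro ⟨hX, hY, h⟩
    exact ⟨_, (add_tsub_cancel_of_le hX).symm, by rw [h, add_tsub_cancel_of_le hY]⟩
  · rintro ⟨K, rfl, rfl⟩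
    exact ⟨le_add_right le_rfl, le_add_right le_rfl,
      by rw [add_tsub_cancel_left, add_tsub_cancel_left]⟩

theorem ptSTrans_eq_sigmaTrans : ptSTrans m n = sigmaTrans FiringRule.strong.Step := by
  funext s lab s'
  simp only [ptSTrans, sigmaTrans, SLts, FiringRule.Step, sFire_iff, Prod.ext_iff]
  rfl

theorem ptWTrans_eq_sigmaTrans : ptWTrans m n = sigmaTrans FiringRule.weak.Step := by
  funext s lab s'
  simp only [ptWTrans, sigmaTrans, WLts, FiringRule.Step, Prod.ext_iff]
  rfl

variable (ρ : FiringRule) {M₁ M₂ : PTNet k l} {X₁ : Multiset M₁.P} {X₂ : Multiset M₂.P}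

theorem bisimilar_comp_right (h : Bisimilar (sigmaTrans ρ.Step) ⟨M₁, X₁⟩ ⟨M₂, X₂⟩)
    (R : PTNet l m) (Z : Multiset R.P) :
    Bisimilar (sigmaTrans ρ.Step) ⟨M₁.comp R, mmk X₁ Z⟩ ⟨M₂.comp R, mmk X₂ Z⟩ :=
  h.sigmaTrans_context (comp_step_mmk_iff ρ M₁ R) (comp_step_mmk_iff ρ M₂ R) Z

theorem bisimilar_comp_left (h : Bisimilar (sigmaTrans ρ.Step) ⟨M₁, X₁⟩ ⟨M₂, X₂⟩)
    (L : PTNet m k) (W : Multiset L.P) :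
    Bisimilar (sigmaTrans ρ.Step) ⟨L.comp M₁, mmk W X₁⟩ ⟨L.comp M₂, mmk W X₂⟩ :=
  h.sigmaTrans_context' (comp_step_mmk_iff ρ L M₁) (comp_step_mmk_iff ρ L M₂) W

theorem bisimilar_tensor_right (h : Bisimilar (sigmaTrans ρ.Step) ⟨M₁, X₁⟩ ⟨M₂, X₂⟩)
    (R : PTNet m n) (Z : Multiset R.P) :
    Bisimilar (sigmaTrans ρ.Step) ⟨M₁.tensor R, mmk X₁ Z⟩ ⟨M₂.tensor R, mmk X₂ Z⟩ :=
  h.sigmaTrans_context (tensor_step_mmk_iff ρ M₁ R) (tensor_step_mmk_iff ρ M₂ R) Z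

theorem bisimilar_tensor_left (h : Bisimilar (sigmaTrans ρ.Step) ⟨M₁, X₁⟩ ⟨M₂, X₂⟩)
    (R : PTNet m n) (Z : Multiset R.P) :
    Bisimilar (sigmaTrans ρ.Step) ⟨R.tensor M₁, mmk Z X₁⟩ ⟨R.tensor M₂, mmk Z X₂⟩ :=
  h.sigmaTrans_context' (tensor_step_mmk_iff ρ R M₁) (tensor_step_mmk_iff ρ R M₂) Z

end PTNet

/-- Proposition `ptnetcongruence`: bisimilarity of C/E nets
with boundaries is a congruence w.r.t. the tensor product `⊗`, and both strong
and weak bisimilarity of P/T nets with boundaries are congruences w.r.t.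
composition `;` and tensor `⊗` (on either side). -/
theorem stmt7 :
    -- C/E nets: tensor congruence
    (∀ (k l m n : ℕ) (M₁ M₂ : CENet k l) (R : CENet m n),
       M₁.Valid → M₂.Valid → R.Valid →
       ∀ (X₁ : Set M₁.P) (X₂ : Set M₂.P) (Z : Set R.P),
         Bisimilar (ceTrans k l) ⟨M₁, X₁⟩ ⟨M₂, X₂⟩ →
         Bisimilar (ceTrans (k + m) (l + n))
           ⟨M₁.tensor R, CENet.mk2 X₁ Z⟩ ⟨M₂.tensor R, CENet.mk2 X₂ Z⟩ ∧
         Bisimilar (ceTrans (m + k) (n + l))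
           ⟨R.tensor M₁, CENet.mk2 Z X₁⟩ ⟨R.tensor M₂, CENet.mk2 Z X₂⟩) ∧
    -- P/T nets, strong semantics: composition and tensor congruence
    (∀ (k l : ℕ) (M₁ M₂ : PTNet k l),
       M₁.Valid → M₂.Valid →
       ∀ (X₁ : Multiset M₁.P) (X₂ : Multiset M₂.P),
         Bisimilar (ptSTrans k l) ⟨M₁, X₁⟩ ⟨M₂, X₂⟩ →
         (∀ (m : ℕ) (R : PTNet l m), R.Valid → ∀ Z : Multiset R.P,
            Bisimilar (ptSTrans k m)
              ⟨M₁.comp R, PTNet.mmk X₁ Z⟩ ⟨M₂.comp R, PTNet.mmk X₂ Z⟩) ∧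
         (∀ (m : ℕ) (L : PTNet m k), L.Valid → ∀ W : Multiset L.P,
            Bisimilar (ptSTrans m l)
              ⟨L.comp M₁, PTNet.mmk W X₁⟩ ⟨L.comp M₂, PTNet.mmk W X₂⟩) ∧
         (∀ (m n : ℕ) (R : PTNet m n), R.Valid → ∀ Z : Multiset R.P,
            Bisimilar (ptSTrans (k + m) (l + n))
              ⟨M₁.tensor R, PTNet.mmk X₁ Z⟩ ⟨M₂.tensor R, PTNet.mmk X₂ Z⟩ ∧
            Bisimilar (ptSTrans (m + k) (n + l))
              ⟨R.tensor M₁, PTNet.mmk Z X₁⟩ ⟨R.tensor M₂, PTNet.mmk Z X₂⟩)) ∧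
    -- P/T nets, weak semantics: composition and tensor congruence
    (∀ (k l : ℕ) (M₁ M₂ : PTNet k l),
       M₁.Valid → M₂.Valid →
       ∀ (X₁ : Multiset M₁.P) (X₂ : Multiset M₂.P),
         Bisimilar (ptWTrans k l) ⟨M₁, X₁⟩ ⟨M₂, X₂⟩ →
         (∀ (m : ℕ) (R : PTNet l m), R.Valid → ∀ Z : Multiset R.P,
            Bisimilar (ptWTrans k m)
              ⟨M₁.comp R, PTNet.mmk X₁ Z⟩ ⟨M₂.comp R, PTNet.mmk X₂ Z⟩) ∧
         (∀ (m : ℕ) (L : PTNet m k), L.Valid → ∀ W : Multiset L.P,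
            Bisimilar (ptWTrans m l)
              ⟨L.comp M₁, PTNet.mmk W X₁⟩ ⟨L.comp M₂, PTNet.mmk W X₂⟩) ∧
         (∀ (m n : ℕ) (R : PTNet m n), R.Valid → ∀ Z : Multiset R.P,
            Bisimilar (ptWTrans (k + m) (l + n))
              ⟨M₁.tensor R, PTNet.mmk X₁ Z⟩ ⟨M₂.tensor R, PTNet.mmk X₂ Z⟩ ∧
            Bisimilar (ptWTrans (m + k) (n + l))
              ⟨R.tensor M₁, PTNet.mmk Z X₁⟩ ⟨R.tensor M₂, PTNet.mmk Z X₂⟩)) := by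
  refine ⟨fun k l m n M₁ M₂ R _ _ _ X₁ X₂ Z h =>
      ⟨CENet.bisimilar_tensor_right h R Z, CENet.bisimilar_tensor_left h R Z⟩,
    fun k l M₁ M₂ _ _ X₁ X₂ h => ?_, fun k l M₁ M₂ _ _ X₁ X₂ h => ?_⟩
  all_goals
    simp only [PTNet.ptSTrans_eq_sigmaTrans, PTNet.ptWTrans_eq_sigmaTrans] at h ⊢
    exact ⟨fun _ R _ Z => PTNet.bisimilar_comp_right _ h R Z,
      fun _ L _ W => PTNet.bisimilar_comp_left _ h L W,
      fun _ _ R _ Z => ⟨PTNet.bisimilar_tensor_right _ h R Z, PTNet.bisimilar_tensor_left _ h R Z⟩⟩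
end

section
/- For ⋈ ∈ {∼, ≈} (strong, resp. weak bisimilarity of Petri calculus terms): (i) if P : (k,l), Q : (l,m), R : (m,n) then (P;Q);R ⋈ P;(Q;R); (ii) if P : (k,l), Q : (m,n), R : (t,u) then (P⊗Q)⊗R ⋈ P⊗(Q⊗R); (iii) if P : (k,l), Q : (l,m), R : (n,t), S : (t,u) then (P;Q)⊗(R;S) ⋈ (P⊗R);(Q⊗S). -/
/-- Syntax of the Petri calculus. -/
inductive PTerm : Type
  | empty               -- ○ (empty one-place buffer)
  | full                -- ● (full one-place buffer)
  | iden                -- I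
  | tw                  -- X
  | diag                -- Δ
  | codiag              -- ∇
  | bot                 -- ⊥
  | top                 -- ⊤
  | lam                 -- Λ
  | vee                 -- V
  | down                -- ↓
  | up                  -- ↑
  | tens (P Q : PTerm)  -- ⊗
  | seq (P Q : PTerm)   -- ;
  deriving DecidableEq

namespace PTerm

/-- Sorting discipline of the Petri calculus. -/
inductive HasSort : PTerm → ℕ → ℕ → Prop
  | empty : HasSort .empty 1 1
  | full : HasSort .full 1 1
  | iden : HasSort .iden 1 1
  | tw : HasSort .tw 2 2
  | diag : HasSort .diag 1 2
  | codiag : HasSort .codiag 2 1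
  | bot : HasSort .bot 1 0
  | top : HasSort .top 0 1
  | lam : HasSort .lam 1 2
  | vee : HasSort .vee 2 1
  | down : HasSort .down 1 0
  | up : HasSort .up 0 1
  | tens {P Q : PTerm} {k l m n : ℕ} :
      HasSort P k l → HasSort Q m n → HasSort (.tens P Q) (k + m) (l + n)
  | seq {P Q : PTerm} {k n l : ℕ} :
      HasSort P k n → HasSort Q n l → HasSort (.seq P Q) k l

/-- Basic connectors are the constants of the calculus. -/
def IsBasic : PTerm → Prop
  | .tens _ _ => False
  | .seq _ _ => False
  | _ => True

/-- Stateless terms contain no buffers ○, ●. -/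
def Stateless : PTerm → Prop
  | .empty => False
  | .full => False
  | .tens P Q => Stateless P ∧ Stateless Q
  | .seq P Q => Stateless P ∧ Stateless Q
  | _ => True

/-- Strong operational semantics of the Petri calculus.  Labels are words
over ℕ (the rules only produce entries in {0,1}). -/
inductive Step : PTerm → List ℕ → List ℕ → PTerm → Prop
  | tkI : Step .empty [1] [0] .full
  | tkO : Step .full [0] [1] .empty
  | iden : Step .iden [1] [1] .iden
  | tw {a b : ℕ} : a ≤ 1 → b ≤ 1 → Step .tw [a, b] [b, a] .tw
  | bot : Step .bot [1] [] .bot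
  | top : Step .top [] [1] .top
  | diag : Step .diag [1] [1, 1] .diag
  | codiag : Step .codiag [1, 1] [1] .codiag
  | lam {a : ℕ} : a ≤ 1 → Step .lam [1] [1 - a, a] .lam
  | vee {a : ℕ} : a ≤ 1 → Step .vee [1 - a, a] [1] .vee
  | refl {C : PTerm} {k l : ℕ} : IsBasic C → HasSort C k l →
      Step C (List.replicate k 0) (List.replicate l 0) C
  | cut {P Q R S : PTerm} {α β γ : List ℕ} :
      Step P α γ Q → Step R γ β S → Step (.seq P R) α β (.seq Q S)
  | ten {P Q R S : PTerm} {α₁ α₂ β₁ β₂ : List ℕ} :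
      Step P α₁ β₁ Q → Step R α₂ β₂ S →
      Step (.tens P R) (α₁ ++ α₂) (β₁ ++ β₂) (.tens Q S)

/-- Weak operational semantics of the Petri calculus: the same rules plus the
rule (Weak) composing consecutive steps by pointwise addition of labels. -/
inductive Weak : PTerm → List ℕ → List ℕ → PTerm → Prop
  | tkI : Weak .empty [1] [0] .full
  | tkO : Weak .full [0] [1] .empty
  | iden : Weak .iden [1] [1] .iden
  | tw {a b : ℕ} : a ≤ 1 → b ≤ 1 → Weak .tw [a, b] [b, a] .tw
  | bot : Weak .bot [1] [] .bot
  | top : Weak .top [] [1] .top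
  | diag : Weak .diag [1] [1, 1] .diag
  | codiag : Weak .codiag [1, 1] [1] .codiag
  | lam {a : ℕ} : a ≤ 1 → Weak .lam [1] [1 - a, a] .lam
  | vee {a : ℕ} : a ≤ 1 → Weak .vee [1 - a, a] [1] .vee
  | refl {C : PTerm} {k l : ℕ} : IsBasic C → HasSort C k l →
      Weak C (List.replicate k 0) (List.replicate l 0) C
  | cut {P Q R S : PTerm} {α β γ : List ℕ} :
      Weak P α γ Q → Weak R γ β S → Weak (.seq P R) α β (.seq Q S)
  | ten {P Q R S : PTerm} {α₁ α₂ β₁ β₂ : List ℕ} :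
      Weak P α₁ β₁ Q → Weak R α₂ β₂ S →
      Weak (.tens P R) (α₁ ++ α₂) (β₁ ++ β₂) (.tens Q S)
  | weak {P R Q : PTerm} {α₁ α₂ β₁ β₂ : List ℕ} :
      Weak P α₁ β₁ R → Weak R α₂ β₂ Q →
      Weak P (List.zipWith (· + ·) α₁ α₂) (List.zipWith (· + ·) β₁ β₂) Q

end PTerm
/-- Strong transition relation of the Petri calculus, packaged with paired labels. -/
def pcStrongTr : PTerm → List ℕ × List ℕ → PTerm → Prop :=
  fun P a Q => PTerm.Step P a.1 a.2 Q

/-- Weak transition relation of the Petri calculus, packaged with paired labels. -/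
def pcWeakTr : PTerm → List ℕ × List ℕ → PTerm → Prop :=
  fun P a Q => PTerm.Weak P a.1 a.2 Q

/-- Strong bisimilarity `∼` of Petri calculus terms. -/
def SBisim (P Q : PTerm) : Prop := Bisimilar pcStrongTr P Q

/-- Weak bisimilarity `≈` of Petri calculus terms. -/
def WBisim (P Q : PTerm) : Prop := Bisimilar pcWeakTr P Q

/-! The three laws are witnessed by the bisimulations relating all pairs of terms of the two
shapes. This works for any transition relation in which the transitions of `P ; R` and
`P ⊗ R` are exactly the composites of transitions of the components, i.e. where the rules
(Cut) and (Ten) can be inverted. For the strong semantics inversion is immediate, since no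
other rule concludes a transition of a composite term. For the weak semantics it follows by
induction on the derivation: transitions preserve sorts, so in an instance of (Weak) both
labels split at the same position along `⊗` and pointwise addition commutes with the split. -/

namespace PTerm

theorem HasSort.unique {P : PTerm} {k l k' l' : ℕ} (h : HasSort P k l)
    (h' : HasSort P k' l') : k = k' ∧ l = l' := by
  induction h generalizing k' l' with
  | tens _ _ ih₁ ih₂ =>
    cases h' with
    | tens h₁ h₂ =>
      obtain ⟨rfl, rfl⟩ := ih₁ h₁
      obtain ⟨rfl, rfl⟩ := ih₂ h₂
      exact ⟨rfl, rfl⟩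
  | seq _ _ ih₁ ih₂ =>
    cases h' with
    | seq h₁ h₂ =>
      obtain ⟨rfl, rfl⟩ := ih₁ h₁
      exact ⟨rfl, (ih₂ h₂).2⟩
  | _ => cases h'; exact ⟨rfl, rfl⟩

theorem HasSort.of_tens {P R : PTerm} {k l : ℕ} (h : HasSort (.tens P R) k l) :
    ∃ k₁ l₁ k₂ l₂, HasSort P k₁ l₁ ∧ HasSort R k₂ l₂ := by
  cases h with
  | tens hP hR => exact ⟨_, _, _, _, hP, hR⟩

theorem HasSort.of_seq {P R : PTerm} {k l : ℕ} (h : HasSort (.seq P R) k l) :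
    ∃ n, HasSort P k n ∧ HasSort R n l := by
  cases h with
  | seq hP hR => exact ⟨_, hP, hR⟩

theorem Step.toWeak {P Q : PTerm} {α β : List ℕ} (h : Step P α β Q) : Weak P α β Q := by
  induction h with
  | refl hC hs => exact .refl hC hs
  | cut _ _ ih₁ ih₂ => exact .cut ih₁ ih₂
  | ten _ _ ih₁ ih₂ => exact .ten ih₁ ih₂
  | _ => constructor <;> assumption

theorem Weak.hasSort {P Q : PTerm} {α β : List ℕ} {k l : ℕ} (h : Weak P α β Q)
    (hP : HasSort P k l) : α.length = k ∧ β.length = l ∧ HasSort Q k l := by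
  induction h generalizing k l with
  | refl _ hs =>
    obtain ⟨rfl, rfl⟩ := hs.unique hP
    exact ⟨List.length_replicate, List.length_replicate, hs⟩
  | cut _ _ ih₁ ih₂ =>
    cases hP with
    | seq hP hR =>
      obtain ⟨hα, -, hQ⟩ := ih₁ hP
      obtain ⟨-, hβ, hS⟩ := ih₂ hR
      exact ⟨hα, hβ, hQ.seq hS⟩
  | ten _ _ ih₁ ih₂ =>
    cases hP with
    | tens hP hR =>
      obtain ⟨hα₁, hβ₁, hQ⟩ := ih₁ hP
      obtain ⟨hα₂, hβ₂, hS⟩ := ih₂ hR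
      exact ⟨by rw [List.length_append, hα₁, hα₂], by rw [List.length_append, hβ₁, hβ₂],
        hQ.tens hS⟩
  | weak _ _ ih₁ ih₂ =>
    obtain ⟨hα₁, hβ₁, hR⟩ := ih₁ hP
    obtain ⟨hα₂, hβ₂, hQ⟩ := ih₂ hR
    simp only [List.length_zipWith]
    exact ⟨by omega, by omega, hQ⟩
  | _ => cases hP; exact ⟨rfl, rfl, by constructor⟩

theorem Step.hasSort {P Q : PTerm} {α β : List ℕ} {k l : ℕ} (h : Step P α β Q)
    (hP : HasSort P k l) : α.length = k ∧ β.length = l ∧ HasSort Q k l :=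
  h.toWeak.hasSort hP

theorem Step.seq_iff {P R T : PTerm} {α β : List ℕ} :
    Step (.seq P R) α β T ↔ ∃ Q S γ, T = .seq Q S ∧ Step P α γ Q ∧ Step R γ β S := by
  constructor
  · intro h
    cases h with
    | refl hC _ => exact hC.elim
    | cut h₁ h₂ => exact ⟨_, _, _, rfl, h₁, h₂⟩
  · rintro ⟨Q, S, γ, rfl, h₁, h₂⟩
    exact h₁.cut h₂

theorem Step.tens_iff {P R T : PTerm} {α β : List ℕ} :
    Step (.tens P R) α β T ↔ ∃ Q S α₁ α₂ β₁ β₂, T = .tens Q S ∧ α = α₁ ++ α₂ ∧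
      β = β₁ ++ β₂ ∧ Step P α₁ β₁ Q ∧ Step R α₂ β₂ S := by
  constructor
  · intro h
    cases h with
    | refl hC _ => exact hC.elim
    | ten h₁ h₂ => exact ⟨_, _, _, _, _, _, rfl, rfl, rfl, h₁, h₂⟩
  · rintro ⟨Q, S, α₁, α₂, β₁, β₂, rfl, rfl, rfl, h₁, h₂⟩
    exact h₁.ten h₂

theorem Weak.seq_iff {P R T : PTerm} {α β : List ℕ} :
    Weak (.seq P R) α β T ↔ ∃ Q S γ, T = .seq Q S ∧ Weak P α γ Q ∧ Weak R γ β S := by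
  constructor
  · intro h
    generalize hX : PTerm.seq P R = X at h
    induction h generalizing P R with
    | refl hC _ => subst hX; exact hC.elim
    | cut h₁ h₂ => cases hX; exact ⟨_, _, _, rfl, h₁, h₂⟩
    | weak _ _ ih₁ ih₂ =>
      obtain ⟨Q₁, S₁, γ₁, rfl, h₁, h₂⟩ := ih₁ hX
      obtain ⟨Q₂, S₂, γ₂, rfl, h₃, h₄⟩ := ih₂ rfl
      exact ⟨Q₂, S₂, _, rfl, h₁.weak h₃, h₂.weak h₄⟩
    | _ => cases hX
  · rintro ⟨Q, S, γ, rfl, h₁, h₂⟩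
    exact h₁.cut h₂

theorem Weak.tens_iff {P R T : PTerm} {α β : List ℕ} {k l m n : ℕ} (hP : HasSort P k l)
    (hR : HasSort R m n) :
    Weak (.tens P R) α β T ↔ ∃ Q S α₁ α₂ β₁ β₂, T = .tens Q S ∧ α = α₁ ++ α₂ ∧
      β = β₁ ++ β₂ ∧ Weak P α₁ β₁ Q ∧ Weak R α₂ β₂ S := by
  constructor
  · intro h
    generalize hX : PTerm.tens P R = X at h
    induction h generalizing P R with
    | refl hC _ => subst hX; exact hC.elim
    | ten h₁ h₂ => cases hX; exact ⟨_, _, _, _, _, _, rfl, rfl, rfl, h₁, h₂⟩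
    | weak _ _ ih₁ ih₂ =>
      obtain ⟨Q₁, S₁, α₁, α₂, β₁, β₂, rfl, rfl, rfl, h₁, h₂⟩ := ih₁ hP hR hX
      obtain ⟨hα₁, hβ₁, hQ₁⟩ := h₁.hasSort hP
      obtain ⟨-, -, hS₁⟩ := h₂.hasSort hR
      obtain ⟨Q₂, S₂, α₃, α₄, β₃, β₄, rfl, rfl, rfl, h₃, h₄⟩ := ih₂ hQ₁ hS₁ rfl
      obtain ⟨hα₃, hβ₃, -⟩ := h₃.hasSort hQ₁
      refine ⟨Q₂, S₂, _, _, _, _, rfl, List.zipWith_append (by omega),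
        List.zipWith_append (by omega), h₁.weak h₃, h₂.weak h₄⟩
    | _ => cases hX
  · rintro ⟨Q, S, α₁, α₂, β₁, β₂, rfl, rfl, rfl, h₁, h₂⟩
    exact h₁.ten h₂

def SeqCompositional (tr : PTerm → List ℕ × List ℕ → PTerm → Prop) : Prop :=
  ∀ P R T α β, tr (.seq P R) (α, β) T ↔
    ∃ Q S γ, T = .seq Q S ∧ tr P (α, γ) Q ∧ tr R (γ, β) S

def TensCompositional (tr : PTerm → List ℕ × List ℕ → PTerm → Prop) : Prop :=
  ∀ {P R k l m n}, HasSort P k l → HasSort R m n → ∀ T α β,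
    (tr (.tens P R) (α, β) T ↔ ∃ Q S α₁ α₂ β₁ β₂, T = .tens Q S ∧ α = α₁ ++ α₂ ∧
      β = β₁ ++ β₂ ∧ tr P (α₁, β₁) Q ∧ tr R (α₂, β₂) S)

def PreservesSort (tr : PTerm → List ℕ × List ℕ → PTerm → Prop) : Prop :=
  ∀ {P Q α β k l}, tr P (α, β) Q → HasSort P k l →
    α.length = k ∧ β.length = l ∧ HasSort Q k l

section Structural

variable {tr : PTerm → List ℕ × List ℕ → PTerm → Prop}

theorem bisimilar_seq_assoc (hseq : SeqCompositional tr) (P Q R : PTerm) :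
    Bisimilar tr (.seq (.seq P Q) R) (.seq P (.seq Q R)) := by
  refine ⟨fun X Y => ∃ A B C, X = .seq (.seq A B) C ∧ Y = .seq A (.seq B C), ?_,
    P, Q, R, rfl, rfl⟩
  rintro _ _ ⟨A, B, C, rfl, rfl⟩
  constructor
  · rintro ⟨α, β⟩ X' h
    obtain ⟨_, C', γ, rfl, h₁, h₂⟩ := (hseq ..).1 h
    obtain ⟨A', B', δ, rfl, h₃, h₄⟩ := (hseq ..).1 h₁
    exact ⟨_, (hseq ..).2 ⟨A', _, δ, rfl, h₃, (hseq ..).2 ⟨B', C', γ, rfl, h₄, h₂⟩⟩,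
      A', B', C', rfl, rfl⟩
  · rintro ⟨α, β⟩ Y' h
    obtain ⟨A', _, γ, rfl, h₁, h₂⟩ := (hseq ..).1 h
    obtain ⟨B', C', δ, rfl, h₃, h₄⟩ := (hseq ..).1 h₂
    exact ⟨_, (hseq ..).2 ⟨_, C', δ, rfl, (hseq ..).2 ⟨A', B', γ, rfl, h₁, h₃⟩, h₄⟩,
      A', B', C', rfl, rfl⟩

/- The bisimulations below carry sortability of the left-hand term, which `⊗`-inversion
needs; it passes to the residual by `PreservesSort`, applied to the left-hand step whether
that step was given or constructed. -/

theorem bisimilar_tens_assoc (htens : TensCompositional tr) (hsort : PreservesSort tr)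
    {P Q R : PTerm} {k l m n t u : ℕ} (hP : HasSort P k l) (hQ : HasSort Q m n)
    (hR : HasSort R t u) :
    Bisimilar tr (.tens (.tens P Q) R) (.tens P (.tens Q R)) := by
  refine ⟨fun X Y => ∃ A B C, X = .tens (.tens A B) C ∧ Y = .tens A (.tens B C) ∧
      ∃ k l, HasSort X k l, ?_, P, Q, R, rfl, rfl, _, _, (hP.tens hQ).tens hR⟩
  rintro _ _ ⟨A, B, C, rfl, rfl, _, _, hX⟩
  obtain ⟨_, _, _, _, hAB, hC⟩ := hX.of_tens
  obtain ⟨_, _, _, _, hA, hB⟩ := hAB.of_tens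
  constructor
  · rintro ⟨α, β⟩ X' h
    obtain ⟨_, C', α₁, α₂, β₁, β₂, rfl, rfl, rfl, h₁, h₂⟩ :=
      (htens (hA.tens hB) hC ..).1 h
    obtain ⟨A', B', α₃, α₄, β₃, β₄, rfl, rfl, rfl, h₃, h₄⟩ := (htens hA hB ..).1 h₁
    refine ⟨_, (htens hA (hB.tens hC) ..).2 ⟨A', _, _, _, _, _, rfl,
      List.append_assoc .., List.append_assoc .., h₃, (htens hB hC ..).2
        ⟨B', C', _, _, _, _, rfl, rfl, rfl, h₄, h₂⟩⟩,
      A', B', C', rfl, rfl, _, _, (hsort h hX).2.2⟩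
  · rintro ⟨α, β⟩ Y' h
    obtain ⟨A', _, α₁, α₂, β₁, β₂, rfl, rfl, rfl, h₁, h₂⟩ :=
      (htens hA (hB.tens hC) ..).1 h
    obtain ⟨B', C', α₃, α₄, β₃, β₄, rfl, rfl, rfl, h₃, h₄⟩ := (htens hB hC ..).1 h₂
    have h' : tr (.tens (.tens A B) C) (α₁ ++ (α₃ ++ α₄), β₁ ++ (β₃ ++ β₄))
        (.tens (.tens A' B') C') :=
      (htens (hA.tens hB) hC ..).2 ⟨_, C', _, _, _, _, rfl, (List.append_assoc ..).symm,
        (List.append_assoc ..).symm, (htens hA hB ..).2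
          ⟨A', B', _, _, _, _, rfl, rfl, rfl, h₁, h₃⟩, h₄⟩
    exact ⟨_, h', A', B', C', rfl, rfl, _, _, (hsort h' hX).2.2⟩

theorem bisimilar_tens_seq_exchange (hseq : SeqCompositional tr)
    (htens : TensCompositional tr) (hsort : PreservesSort tr) {P Q R S : PTerm}
    {k l m n t u : ℕ} (hP : HasSort P k l) (hQ : HasSort Q l m) (hR : HasSort R n t)
    (hS : HasSort S t u) :
    Bisimilar tr (.tens (.seq P Q) (.seq R S)) (.seq (.tens P R) (.tens Q S)) := by
  refine ⟨fun X Y => ∃ A B C D, X = .tens (.seq A B) (.seq C D) ∧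
      Y = .seq (.tens A C) (.tens B D) ∧ ∃ k l, HasSort X k l, ?_,
    P, Q, R, S, rfl, rfl, _, _, (hP.seq hQ).tens (hR.seq hS)⟩
  rintro _ _ ⟨A, B, C, D, rfl, rfl, _, _, hX⟩
  obtain ⟨_, _, _, _, hAB, hCD⟩ := hX.of_tens
  obtain ⟨_, hA, hB⟩ := hAB.of_seq
  obtain ⟨_, hC, hD⟩ := hCD.of_seq
  constructor
  · rintro ⟨α, β⟩ X' h
    obtain ⟨_, _, α₁, α₂, β₁, β₂, rfl, rfl, rfl, h₁, h₂⟩ :=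
      (htens (hA.seq hB) (hC.seq hD) ..).1 h
    obtain ⟨A', B', γ₁, rfl, h₃, h₄⟩ := (hseq ..).1 h₁
    obtain ⟨C', D', γ₂, rfl, h₅, h₆⟩ := (hseq ..).1 h₂
    exact ⟨_, (hseq ..).2 ⟨_, _, γ₁ ++ γ₂, rfl,
      (htens hA hC ..).2 ⟨A', C', _, _, _, _, rfl, rfl, rfl, h₃, h₅⟩,
      (htens hB hD ..).2 ⟨B', D', _, _, _, _, rfl, rfl, rfl, h₄, h₆⟩⟩,
      A', B', C', D', rfl, rfl, _, _, (hsort h hX).2.2⟩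
  · rintro ⟨α, β⟩ Y' h
    obtain ⟨_, _, γ, rfl, h₁, h₂⟩ := (hseq ..).1 h
    obtain ⟨A', C', α₁, α₂, γ₁, γ₂, rfl, rfl, rfl, h₃, h₄⟩ := (htens hA hC ..).1 h₁
    obtain ⟨B', D', γ₃, γ₄, β₁, β₂, rfl, hγ, rfl, h₅, h₆⟩ := (htens hB hD ..).1 h₂
    -- both splittings of the middle label are after the wires between `A` and `B`
    obtain ⟨rfl, rfl⟩ := List.append_inj hγ
      (((hsort h₃ hA).2.1).trans (hsort h₅ hB).1.symm)
    have h' : tr (.tens (.seq A B) (.seq C D)) (α₁ ++ α₂, β₁ ++ β₂)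
        (.tens (.seq A' B') (.seq C' D')) :=
      (htens (hA.seq hB) (hC.seq hD) ..).2 ⟨_, _, _, _, _, _, rfl, rfl, rfl,
        (hseq ..).2 ⟨A', B', _, rfl, h₃, h₅⟩, (hseq ..).2 ⟨C', D', _, rfl, h₄, h₆⟩⟩
    exact ⟨_, h', A', B', C', D', rfl, rfl, _, _, (hsort h' hX).2.2⟩

end Structural

theorem seqCompositional_step : SeqCompositional pcStrongTr := fun _ _ _ _ _ => Step.seq_iff

theorem seqCompositional_weak : SeqCompositional pcWeakTr := fun _ _ _ _ _ => Weak.seq_iff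

theorem tensCompositional_step : TensCompositional pcStrongTr :=
  fun _ _ _ _ _ => Step.tens_iff

theorem tensCompositional_weak : TensCompositional pcWeakTr :=
  fun hP hR _ _ _ => Weak.tens_iff hP hR

theorem preservesSort_step : PreservesSort pcStrongTr := fun h hP => h.hasSort hP

theorem preservesSort_weak : PreservesSort pcWeakTr := fun h hP => h.hasSort hP

end PTerm

open PTerm

/-- Lemma `syntaxBisimilarities`: associativity of `;` and
`⊗` and the exchange law, up to strong and weak bisimilarity of Petri
calculus terms. -/
theorem stmt11 :
    -- (i) associativity of ;
    (∀ (P Q R : PTerm) (k l m n : ℕ),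
       PTerm.HasSort P k l → PTerm.HasSort Q l m → PTerm.HasSort R m n →
       SBisim (.seq (.seq P Q) R) (.seq P (.seq Q R)) ∧
       WBisim (.seq (.seq P Q) R) (.seq P (.seq Q R))) ∧
    -- (ii) associativity of ⊗
    (∀ (P Q R : PTerm) (k l m n t u : ℕ),
       PTerm.HasSort P k l → PTerm.HasSort Q m n → PTerm.HasSort R t u →
       SBisim (.tens (.tens P Q) R) (.tens P (.tens Q R)) ∧
       WBisim (.tens (.tens P Q) R) (.tens P (.tens Q R))) ∧
    -- (iii) exchange law
    (∀ (P Q R S : PTerm) (k l m n t u : ℕ),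
       PTerm.HasSort P k l → PTerm.HasSort Q l m →
       PTerm.HasSort R n t → PTerm.HasSort S t u →
       SBisim (.tens (.seq P Q) (.seq R S)) (.seq (.tens P R) (.tens Q S)) ∧
       WBisim (.tens (.seq P Q) (.seq R S)) (.seq (.tens P R) (.tens Q S))) := by
  refine ⟨fun P Q R _ _ _ _ _ _ _ => ⟨?_, ?_⟩, fun _ _ _ _ _ _ _ _ _ hP hQ hR => ⟨?_, ?_⟩,
    fun _ _ _ _ _ _ _ _ _ _ hP hQ hR hS => ⟨?_, ?_⟩⟩
  · exact bisimilar_seq_assoc seqCompositional_step P Q R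
  · exact bisimilar_seq_assoc seqCompositional_weak P Q R
  · exact bisimilar_tens_assoc tensCompositional_step preservesSort_step hP hQ hR
  · exact bisimilar_tens_assoc tensCompositional_weak preservesSort_weak hP hQ hR
  · exact bisimilar_tens_seq_exchange seqCompositional_step tensCompositional_step
      preservesSort_step hP hQ hR hS
  · exact bisimilar_tens_seq_exchange seqCompositional_weak tensCompositional_weak
      preservesSort_weak hP hQ hR hS
end
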